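/- arXiv:2201.12305 — 5 statements merged into one kernel-verified Lean document; each statement's English description precedes it below -/
import Mathlib

section
/- Let A ⊆ ℝ^n be a centrally symmetric convex body (A = -A) and X ⊆ ℝ^n a finite set such that for all distinct x₁, x₂ ∈ X, the translates x₁ + A and x₂ + A touch each other (intersect with disjoint interiors). Then |X| ≤ 2^n. -/
/-!
Pairwise touching translates `x + A` of a convex body give an antipodal set `X`: a functional `f`
separating the interiors of `x + A` and `y + A` satisfies `f y - f x ≥ width_f A`, while any two
translates meet, so `f` varies on `X` by at most `width_f A`. An antipodal set that affinely spans
`ℝⁿ` has at most `2ⁿ` points (Danzer–Grünbaum): with `U` the interior of `conv X`, the homothets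
of `U` with ratio `1/2` centred at the points of `X` lie in `U`, are pairwise separated by the
functionals witnessing antipodality, and each has volume `2⁻ⁿ vol U`. In general one works in
the affine span of `X`.
-/

open Pointwise

/-- Two sets touch each other if they intersect but their interiors are disjoint. -/
def Touches {n : ℕ} (B C : Set (EuclideanSpace ℝ (Fin n))) : Prop :=
  (B ∩ C).Nonempty ∧ interior B ∩ interior C = ∅

open Set Module MeasureTheory Function
open scoped ENNReal

section Antipodal

variable {E : Type*} [AddCommGroup E] [Module ℝ E]

/-- Antipodality in the sense of Danzer and Grünbaum: any two points of `X` lie on distinct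
parallel supporting hyperplanes of `X`. -/
def IsAntipodal (X : Set E) : Prop :=
  X.Pairwise fun x y ↦ ∃ f : E →ₗ[ℝ] ℝ, f x < f y ∧ ∀ z ∈ X, f x ≤ f z ∧ f z ≤ f y

theorem IsAntipodal.preimage {F : Type*} [AddCommGroup F] [Module ℝ F] {X : Set E}
    (hX : IsAntipodal X) {g : F →ᵃ[ℝ] E} (hg : Injective g) : IsAntipodal (g ⁻¹' X) := by
  intro x hx y hy hxy
  obtain ⟨f, hlt, hbetween⟩ := hX hx hy (hg.ne hxy)
  have hcomp : ∀ z w, (f ∘ₗ g.linear) z - (f ∘ₗ g.linear) w = f (g z) - f (g w) := by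
    intro z w
    rw [← map_sub, ← vsub_eq_sub, LinearMap.comp_apply, g.linearMap_vsub, vsub_eq_sub, map_sub]
  refine ⟨f ∘ₗ g.linear, by linarith [hcomp y x], fun z hz ↦ ?_⟩
  have := hbetween (g z) hz
  constructor <;> linarith [hcomp z x, hcomp y z]

end Antipodal

section Convex

variable {E : Type*} [NormedAddCommGroup E] [NormedSpace ℝ E] {A : Set E}

theorem Convex.subset_of_interior_subset_of_isClosed (hA : Convex ℝ A)
    (hint : (interior A).Nonempty) {S : Set E} (hS : IsClosed S) (h : interior A ⊆ S) :
    A ⊆ S := by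
  refine subset_closure.trans ?_
  rw [← hA.closure_interior_eq_closure_of_nonempty_interior hint]
  exact closure_minimal h hS

theorem Convex.image_homothety_interior_subset (hA : Convex ℝ A) {x : E}
    (hx : x ∈ closure A) {r : ℝ} (hr₀ : 0 < r) (hr₁ : r ≤ 1) :
    AffineMap.homothety x r '' interior A ⊆ interior A := by
  rintro _ ⟨u, hu, rfl⟩
  rw [AffineMap.homothety_eq_lineMap, AffineMap.lineMap_apply_module]
  exact hA.combo_closure_interior_mem_interior hx hu (by linarith) hr₀ (by ring)

end Convex

section FiniteDimensional

variable {E : Type*} [NormedAddCommGroup E] [NormedSpace ℝ E] [FiniteDimensional ℝ E]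

theorem LinearMap.interior_preimage_of_ne_zero {f : E →ₗ[ℝ] ℝ} (hf : f ≠ 0) (s : Set ℝ) :
    interior (f ⁻¹' s) = f ⁻¹' interior s := by
  have hf' : LinearMap.toContinuousLinearMap f ≠ 0 := by simpa using hf
  exact ((LinearMap.toContinuousLinearMap f).isOpenMap_of_ne_zero hf'
    |>.preimage_interior_eq_interior_preimage (LinearMap.toContinuousLinearMap f).continuous s).symm

theorem IsAntipodal.pairwiseDisjoint_image_homothety {X : Set E} (hX : IsAntipodal X) :
    X.PairwiseDisjoint fun x ↦ AffineMap.homothety x (2⁻¹ : ℝ) '' interior (convexHull ℝ X) := by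
  have hf_homothety : ∀ (f : E →ₗ[ℝ] ℝ) x u,
      f (AffineMap.homothety x (2⁻¹ : ℝ) u) = (f x + f u) / 2 := by
    intro f x u
    rw [AffineMap.homothety_apply, vsub_eq_sub, vadd_eq_add, map_add, map_smul, map_sub,
      smul_eq_mul]
    ring
  intro x hx y hy hxy
  obtain ⟨f, hlt, hbetween⟩ := hX hx hy hxy
  have hf : f ≠ 0 := by rintro rfl; simp at hlt
  have hU : interior (convexHull ℝ X) ⊆ f ⁻¹' Ioo (f x) (f y) := by
    rw [← interior_Icc, ← f.interior_preimage_of_ne_zero hf]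
    exact interior_mono <| convexHull_min (fun z hz ↦ hbetween z hz)
      ((convex_Icc _ _).linear_preimage f)
  rw [Function.onFun, Set.disjoint_left]
  rintro _ ⟨u, hu, rfl⟩ ⟨v, hv, huv⟩
  have hfu := (hU hu).2
  have hfv := (hU hv).1
  have := congrArg f huv
  rw [hf_homothety, hf_homothety] at this
  linarith

theorem IsAntipodal.card_le_of_affineSpan_eq_top {X : Finset E} (hX : IsAntipodal (X : Set E))
    (hspan : affineSpan ℝ (X : Set E) = ⊤) : X.card ≤ 2 ^ finrank ℝ E := by
  borelize E
  set μ : Measure E := Measure.addHaar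
  set K := convexHull ℝ (X : Set E)
  set C : E → Set E := fun x ↦ AffineMap.homothety x (2⁻¹ : ℝ) '' interior K
  have hμK : μ (interior K) ≠ 0 ∧ μ (interior K) ≠ ∞ := by
    refine ⟨(isOpen_interior.measure_pos μ ?_).ne', ?_⟩
    · exact interior_convexHull_nonempty_iff_affineSpan_eq_top.2 hspan
    · exact (measure_mono interior_subset).trans_lt
        ((X.finite_toSet.isCompact_convexHull (𝕜 := ℝ)).measure_lt_top) |>.ne
  have hμC : ∀ x, 2 ^ finrank ℝ E * μ (C x) = μ (interior K) := by
    intro x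
    rw [Measure.addHaar_image_homothety, inv_pow, abs_inv, abs_pow, abs_two,
      ENNReal.ofReal_inv_of_pos (by positivity), ENNReal.ofReal_pow zero_le_two,
      ENNReal.ofReal_ofNat, ENNReal.mul_inv_cancel_left (by simp) (by simp)]
  have : (X.card : ℝ≥0∞) * μ (interior K) ≤ 2 ^ finrank ℝ E * μ (interior K) := by
    calc (X.card : ℝ≥0∞) * μ (interior K) = ∑ x ∈ X, 2 ^ finrank ℝ E * μ (C x) := by
          simp [hμC]
      _ = 2 ^ finrank ℝ E * μ (⋃ x ∈ X, C x) := by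
          rw [← Finset.mul_sum, measure_biUnion_finset hX.pairwiseDisjoint_image_homothety
            fun x _ ↦ (AffineMap.homothety_isOpenMap x _ (by norm_num) _
              isOpen_interior).measurableSet]
      _ ≤ 2 ^ finrank ℝ E * μ (interior K) := by
          gcongr
          exact iUnion₂_subset fun x hx ↦ (convex_convexHull ℝ _).image_homothety_interior_subset
            (subset_closure (subset_convexHull ℝ _ hx)) (by norm_num) (by norm_num)
  exact_mod_cast (ENNReal.mul_le_mul_iff_left hμK.1 hμK.2).1 this

theorem IsAntipodal.card_le {X : Finset E} (hX : IsAntipodal (X : Set E)) :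
    X.card ≤ 2 ^ finrank ℝ E := by
  classical
  obtain rfl | ⟨x₀, hx₀⟩ := X.eq_empty_or_nonempty
  · simp
  set V := vectorSpan ℝ (X : Set E)
  set g : V →ᵃ[ℝ] E := (AffineEquiv.vaddConst ℝ x₀).toAffineMap.comp V.subtype.toAffineMap
  have hg : Injective g := (AffineEquiv.vaddConst ℝ x₀).injective.comp Subtype.val_injective
  have hXg : (X : Set E) ⊆ range g := fun x hx ↦
    ⟨⟨x - x₀, vsub_mem_vectorSpan ℝ hx hx₀⟩, by simp [g]⟩
  set Y := X.preimage g hg.injOn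
  have hYX : g '' (Y : Set V) = X := by simpa [Y] using image_preimage_eq_of_subset hXg
  have hYspan : affineSpan ℝ (Y : Set V) = ⊤ := by
    have hY : (Y : Set V).Nonempty := by
      obtain ⟨y, hy⟩ := hXg hx₀
      exact ⟨y, by simpa [Y, hy]⟩
    rw [AffineSubspace.affineSpan_eq_top_iff_vectorSpan_eq_top_of_nonempty ℝ V V hY]
    apply Submodule.map_injective_of_injective V.injective_subtype
    have := g.map_vectorSpan (s := (Y : Set V))
    rw [hYX] at this
    simpa [g] using this
  calc X.card = Y.card := by
        rw [Finset.card_preimage, Finset.filter_true_of_mem fun x hx ↦ hXg hx]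
    _ ≤ 2 ^ finrank ℝ V :=
        IsAntipodal.card_le_of_affineSpan_eq_top (by simpa [Y] using hX.preimage hg) hYspan
    _ ≤ 2 ^ finrank ℝ E := Nat.pow_le_pow_right two_pos (Submodule.finrank_le V)

end FiniteDimensional

section Touching

variable {E : Type*} [NormedAddCommGroup E] [NormedSpace ℝ E] {A : Set E}

theorem Convex.exists_sub_le_of_interior_vadd_inter_eq_empty (hA : Convex ℝ A)
    (hint : (interior A).Nonempty) {x y : E}
    (hxy : interior (x +ᵥ A) ∩ interior (y +ᵥ A) = ∅) :
    ∃ f : E →L[ℝ] ℝ, f x < f y ∧ ∀ a ∈ A, ∀ b ∈ A, f a - f b ≤ f y - f x := by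
  rw [interior_vadd, interior_vadd, ← disjoint_iff_inter_eq_empty] at hxy
  obtain ⟨f, u, hfx, hfy⟩ := geometric_hahn_banach_open_open (hA.interior.vadd x)
    (isOpen_interior.vadd x) (hA.interior.vadd y) (isOpen_interior.vadd y) hxy
  have hx : A ⊆ {a | f (x + a) ≤ u} :=
    hA.subset_of_interior_subset_of_isClosed hint (isClosed_le (by fun_prop) continuous_const)
      fun a ha ↦ (hfx _ (vadd_mem_vadd_set ha)).le
  have hy : A ⊆ {b | u ≤ f (y + b)} :=
    hA.subset_of_interior_subset_of_isClosed hint (isClosed_le continuous_const (by fun_prop))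
      fun b hb ↦ (hfy _ (vadd_mem_vadd_set hb)).le
  obtain ⟨a₀, ha₀⟩ := hint
  have h₀ := (hfx _ (vadd_mem_vadd_set ha₀)).trans (hfy _ (vadd_mem_vadd_set ha₀))
  refine ⟨f, ?_, fun a ha b hb ↦ ?_⟩
  · simp only [vadd_eq_add, map_add] at h₀
    linarith
  · have hxa : f (x + a) ≤ u := hx ha
    have hyb : u ≤ f (y + b) := hy hb
    rw [map_add] at hxa hyb
    linarith

theorem isAntipodal_of_pairwise_touching (hA : Convex ℝ A) (hint : (interior A).Nonempty)
    {X : Set E} (hX : X.Pairwise fun x y ↦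
      ((x +ᵥ A) ∩ (y +ᵥ A)).Nonempty ∧ interior (x +ᵥ A) ∩ interior (y +ᵥ A) = ∅) :
    IsAntipodal X := by
  intro x hx y hy hxy
  obtain ⟨f, hlt, hwidth⟩ := hA.exists_sub_le_of_interior_vadd_inter_eq_empty hint (hX hx hy hxy).2
  have hmeet : ∀ z ∈ X, ∀ w ∈ X, f w - f z ≤ f y - f x := by
    intro z hz w hw
    rcases eq_or_ne z w with rfl | hzw
    · linarith
    obtain ⟨_, ⟨a, ha, rfl⟩, ⟨b, hb, hab⟩⟩ := (hX hz hw hzw).1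
    have : f w - f z = f a - f b := by
      have := congrArg f hab
      simp only [vadd_eq_add, map_add] at this
      linarith
    linarith [hwidth a ha b hb]
  refine ⟨f, hlt, fun z hz ↦ ?_⟩
  simp only [ContinuousLinearMap.coe_coe]
  constructor <;> linarith [hmeet z hz y hy, hmeet x hx z hz]

end Touching

theorem card_le_of_touching_translates_general (n : ℕ) (A : Set (EuclideanSpace ℝ (Fin n)))
    (hconv : Convex ℝ A) (hint : (interior A).Nonempty)
    (X : Finset (EuclideanSpace ℝ (Fin n)))
    (htouch : ∀ x₁ ∈ X, ∀ x₂ ∈ X, x₁ ≠ x₂ → Touches (x₁ +ᵥ A) (x₂ +ᵥ A)) :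
    X.card ≤ 2 ^ n := by
  have hX : IsAntipodal (X : Set (EuclideanSpace ℝ (Fin n))) :=
    isAntipodal_of_pairwise_touching hconv hint fun x hx y hy hxy ↦ htouch x hx y hy hxy
  simpa using hX.card_le

/-- If `A ⊆ ℝⁿ` is a centrally symmetric convex body (`A = -A`) and `X` is a finite set
such that for all distinct `x₁, x₂ ∈ X` the translates `x₁ + A` and `x₂ + A` touch each
other, then `|X| ≤ 2^n`. -/
theorem card_le_of_touching_translates (n : ℕ) (A : Set (EuclideanSpace ℝ (Fin n)))
    (hconv : Convex ℝ A) (hcomp : IsCompact A) (hint : (interior A).Nonempty)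
    (hsymm : A = -A) (X : Finset (EuclideanSpace ℝ (Fin n)))
    (htouch : ∀ x₁ ∈ X, ∀ x₂ ∈ X, x₁ ≠ x₂ → Touches (x₁ +ᵥ A) (x₂ +ᵥ A)) :
    X.card ≤ 2 ^ n :=
  card_le_of_touching_translates_general n A hconv hint X htouch
end

section
/- Let X ⊂ ℝ^n be a finite set, not contained in any hyperplane, such that for any two distinct x₁, x₂ ∈ X there exists a nonzero linear functional f with f(x₂) ≤ f(x) ≤ f(x₁) for all x ∈ X. Then for all distinct x₁, x₂ ∈ X, the sets x₁ - conv(X) and x₂ - conv(X) touch each other, i.e. they intersect but their interiors are disjoint. -/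
/-- If a nonzero linear functional is nonnegative on a set, it is positive on its interior. -/
lemma pos_on_interior (n : ℕ) (f : EuclideanSpace ℝ (Fin n) →ₗ[ℝ] ℝ) (hf : f ≠ 0)
    (S : Set (EuclideanSpace ℝ (Fin n))) (hS : ∀ z ∈ S, 0 ≤ f z)
    {y : EuclideanSpace ℝ (Fin n)} (hy : y ∈ interior S) : 0 < f y := by
  obtain ⟨v, hv⟩ : ∃ v, f v ≠ 0 := by
    by_contra h
    push_neg at h
    exact hf (LinearMap.ext fun v => by simpa using h v)
  -- replace v so that f v < 0
  obtain ⟨w, hw⟩ : ∃ w, f w < 0 := by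
    rcases lt_or_gt_of_ne hv with h | h
    · exact ⟨v, h⟩
    · exact ⟨-v, by simpa using neg_neg_iff_pos.mpr h⟩
  have hw0 : w ≠ 0 := by
    intro h; rw [h] at hw; simp at hw
  obtain ⟨ε, hε, hball⟩ := Metric.mem_nhds_iff.mp (mem_interior_iff_mem_nhds.mp hy)
  set t : ℝ := ε / (2 * ‖w‖) with ht
  have hwn : 0 < ‖w‖ := norm_pos_iff.mpr hw0
  have ht0 : 0 < t := by positivity
  have hmem : y + t • w ∈ S := by
    apply hball
    simp only [Metric.mem_ball, dist_eq_norm]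
    have : y + t • w - y = t • w := by abel
    rw [this, norm_smul, Real.norm_eq_abs, abs_of_pos ht0, ht]
    rw [div_mul_eq_mul_div, mul_comm]
    rw [mul_comm 2 ‖w‖, mul_div_assoc]
    calc ‖w‖ * (ε / (‖w‖ * 2)) = ε / 2 := by field_simp
      _ < ε := by linarith
  have := hS _ hmem
  rw [map_add, map_smul, smul_eq_mul] at this
  nlinarith

/-- Let `X ⊂ ℝⁿ` be a finite set not contained in any hyperplane, such that for any two
distinct `x₁, x₂ ∈ X` there is a nonzero linear functional `f` with
`f x₂ ≤ f x ≤ f x₁` for all `x ∈ X`. Then for all distinct `x₁, x₂ ∈ X`, the sets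
`x₁ - conv(X)` and `x₂ - conv(X)` touch each other: they intersect but their interiors
are disjoint. -/
theorem translated_hulls_touch (n : ℕ) (X : Finset (EuclideanSpace ℝ (Fin n)))
    (hplane : ∀ f : EuclideanSpace ℝ (Fin n) →ₗ[ℝ] ℝ, f ≠ 0 →
      ∀ c : ℝ, ¬ (∀ x ∈ X, f x = c))
    (hsep : ∀ x₁ ∈ X, ∀ x₂ ∈ X, x₁ ≠ x₂ →
      ∃ f : EuclideanSpace ℝ (Fin n) →ₗ[ℝ] ℝ, f ≠ 0 ∧
        ∀ x ∈ X, f x₂ ≤ f x ∧ f x ≤ f x₁)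
    (x₁ x₂ : EuclideanSpace ℝ (Fin n)) (hx₁ : x₁ ∈ X) (hx₂ : x₂ ∈ X) (hne : x₁ ≠ x₂) :
    (((fun b => x₁ - b) '' convexHull ℝ (X : Set (EuclideanSpace ℝ (Fin n)))) ∩
        ((fun b => x₂ - b) '' convexHull ℝ (X : Set (EuclideanSpace ℝ (Fin n))))).Nonempty ∧
    interior ((fun b => x₁ - b) '' convexHull ℝ (X : Set (EuclideanSpace ℝ (Fin n)))) ∩
      interior ((fun b => x₂ - b) '' convexHull ℝ (X : Set (EuclideanSpace ℝ (Fin n)))) = ∅ := by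
  obtain ⟨f, hf0, hfb⟩ := hsep x₁ hx₁ x₂ hx₂ hne
  have h1 : ∀ a ∈ convexHull ℝ (X : Set (EuclideanSpace ℝ (Fin n))), f a ≤ f x₁ := by
    intro a ha
    exact convexHull_min (fun x hx => (hfb x hx).2) (convex_halfSpace_le f.isLinear (f x₁)) ha
  have h2 : ∀ a ∈ convexHull ℝ (X : Set (EuclideanSpace ℝ (Fin n))), f x₂ ≤ f a := by
    intro a ha
    exact convexHull_min (fun x hx => (hfb x hx).1) (convex_halfSpace_ge f.isLinear (f x₂)) ha
  constructor
  · refine ⟨0, ⟨x₁, subset_convexHull ℝ _ hx₁, by simp⟩, ⟨x₂, subset_convexHull ℝ _ hx₂, by simp⟩⟩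
  · rw [Set.eq_empty_iff_forall_notMem]
    rintro y ⟨hy1, hy2⟩
    have hpos : 0 < f y := by
      apply pos_on_interior n f hf0 _ _ hy1
      rintro z ⟨a, ha, rfl⟩
      have := h1 a ha
      simp only [map_sub]
      linarith
    have hneg : 0 < (-f) y := by
      apply pos_on_interior n (-f) (by simpa using hf0) _ _ hy2
      rintro z ⟨a, ha, rfl⟩
      have := h2 a ha
      simp only [LinearMap.neg_apply, map_sub]
      linarith
    simp only [LinearMap.neg_apply] at hneg
    linarith
end

section
/- In the GPT whose state space is the l-fold Cartesian product of q-vertex simplices, let ρ₁, …, ρ_q be the canonical basis vectors of ℝ^q and consider (for q ≥ 2, l ≥ 2) the three states ω₁ = (ρ₁, ρ₁, …, ρ₁), ω₂ = (ρ₁, ρ₂, ρ₁, …, ρ₁), ω₃ = (ρ₂, ρ₁, ρ₁, …, ρ₁). Then ω₁, ω₂, ω₃ are not jointly perfectly distinguishable: there is no triple of componentwise-nonnegative linear functionals (e₁, e₂, e₃) summing to the unit with eᵢ(ω_j) = δ_{ij}. -/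
/-- In the GPT whose state space is the `l`-fold Cartesian product of `q`-vertex
simplices (`q, l ≥ 2`), the three pure states `ω₁ = (ρ₁,…,ρ₁)`, `ω₂ = (ρ₁,ρ₂,ρ₁,…,ρ₁)`,
`ω₃ = (ρ₂,ρ₁,…,ρ₁)` are not jointly perfectly distinguishable: there is no triple of
componentwise-nonnegative linear functionals summing to the unit on states with
`eᵢ(ωⱼ) = δᵢⱼ`. -/
theorem product_simplex_not_jointly_distinguishable (q l : ℕ) (hq : 2 ≤ q) (hl : 2 ≤ l) :
    let ρ : Fin q → (Fin q → ℝ) := fun i => Pi.single i 1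
    let ω₁ : Fin l → Fin q → ℝ := fun _ => ρ ⟨0, by omega⟩
    let ω₂ : Fin l → Fin q → ℝ := Function.update ω₁ ⟨1, by omega⟩ (ρ ⟨1, by omega⟩)
    let ω₃ : Fin l → Fin q → ℝ := Function.update ω₁ ⟨0, by omega⟩ (ρ ⟨1, by omega⟩)
    let ω : Fin 3 → (Fin l → Fin q → ℝ) := ![ω₁, ω₂, ω₃]
    ¬ ∃ e : Fin 3 → ((Fin l → Fin q → ℝ) →ₗ[ℝ] ℝ),
      (∀ k, ∀ x : Fin l → Fin q → ℝ, (∀ p i, 0 ≤ x p i) → 0 ≤ e k x) ∧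
      (∀ x : Fin l → Fin q → ℝ,
        (∀ p, (∀ i, 0 ≤ x p i) ∧ ∑ i, x p i = 1) → ∑ k, e k x = 1) ∧
      (∀ k j : Fin 3, e k (ω j) = if k = j then 1 else 0) := by
  intro ρ ω₁ ω₂ ω₃ ω
  rintro ⟨e, hpos, -, hδ⟩
  have key : ∀ p i, 0 ≤ (ω 1 + ω 2 - ω 0) p i := by
    intro p i
    have h01 : (⟨0, by omega⟩ : Fin l) ≠ ⟨1, by omega⟩ := by
      simp [Fin.ext_iff]
    simp only [Pi.add_apply, Pi.sub_apply, ω, Matrix.cons_val_zero, Matrix.cons_val_one,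
      Matrix.head_cons, Matrix.cons_val_two, Matrix.tail_cons]
    have hnn : ∀ (j : Fin q) (i : Fin q), (0:ℝ) ≤ (Pi.single j 1 : Fin q → ℝ) i := by
      intro j i
      rcases eq_or_ne i j with rfl | h
      · simp
      · simp [Pi.single_apply, h]
    by_cases hp0 : p = ⟨0, by omega⟩
    · subst hp0
      rw [show ω₂ ⟨0, by omega⟩ = ω₁ ⟨0, by omega⟩ from Function.update_of_ne h01 _ _,
        show ω₃ ⟨0, by omega⟩ = ρ ⟨1, by omega⟩ from Function.update_self _ _ _]
      have := hnn ⟨1, by omega⟩ i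
      simp only [ρ] at *
      linarith
    · by_cases hp1 : p = ⟨1, by omega⟩
      · subst hp1
        rw [show ω₂ ⟨1, by omega⟩ = ρ ⟨1, by omega⟩ from Function.update_self _ _ _,
          show ω₃ ⟨1, by omega⟩ = ω₁ ⟨1, by omega⟩ from Function.update_of_ne h01.symm _ _]
        have := hnn ⟨1, by omega⟩ i
        simp only [ρ] at *
        linarith
      · rw [show ω₂ p = ω₁ p from Function.update_of_ne hp1 _ _,
          show ω₃ p = ω₁ p from Function.update_of_ne hp0 _ _]
        have := hnn ⟨0, by omega⟩ i
        simp only [ω₁, ρ] at *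
        linarith
  have h := hpos 0 _ key
  rw [map_sub, map_add] at h
  have h0 := hδ 0 0
  have h1 := hδ 0 1
  have h2 := hδ 0 2
  simp only [show (0:Fin 3) ≠ 1 by decide, show (0:Fin 3) ≠ 2 by decide, if_pos rfl, if_neg, if_false] at h0 h1 h2
  rw [h0, h1, h2] at h
  norm_num at h
end

section
/- Fix integers N ≥ 2, q ≥ N, l ≥ 1 and M ≥ N. If M^N · (1 - ∏_{k=1}^{N-1} (1 - k/q))^l < 1, then there exists a function f : {1,…,M} → {1,…,q}^l such that for every N distinct indices j₁, …, j_N there is a coordinate position p ∈ {1,…,l} at which the values f(j₁)_p, …, f(j_N)_p are all distinct. -/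
open Finset

private lemma sep_prod_eq (N q : ℕ) (hN : 1 ≤ N) (hq : N ≤ q) :
    ∏ k ∈ Finset.Icc 1 (N - 1), (1 - (k : ℝ) / q) = (q.descFactorial N : ℝ) / q ^ N := by
  have hq1 : 1 ≤ q := le_trans hN hq
  have hq0 : (0:ℝ) < q := by exact_mod_cast hq1
  have hdesc : (q.descFactorial N : ℝ) = ∏ i ∈ Finset.range N, ((q:ℝ) - i) := by
    rw [Nat.descFactorial_eq_prod_range, Nat.cast_prod]
    refine Finset.prod_congr rfl fun i hi => ?_
    have : i ≤ q := le_of_lt (lt_of_lt_of_le (Finset.mem_range.mp hi) hq)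
    push_cast [Nat.cast_sub this]
    ring
  have hpow : ((q:ℝ)) ^ N = ∏ _i ∈ Finset.range N, (q:ℝ) := by
    rw [Finset.prod_const, Finset.card_range]
  rw [hdesc, hpow, ← Finset.prod_div_distrib]
  have hins : Finset.range N = insert 0 (Finset.Icc 1 (N - 1)) := by
    ext k; simp only [Finset.mem_range, Finset.mem_insert, Finset.mem_Icc]; omega
  rw [hins, Finset.prod_insert (by simp)]
  have h0 : ((q:ℝ) - (0:ℕ)) / q = 1 := by
    simp [div_self hq0.ne']
  rw [h0, one_mul]
  refine Finset.prod_congr rfl fun k _ => ?_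
  field_simp

/-- Probabilistic-method core: if `M^N · (1 - ∏_{k=1}^{N-1}(1 - k/q))^l < 1`, then there
exists a code `f : {1,…,M} → {1,…,q}^l` such that every `N` distinct codewords are
separated at some coordinate (where they take pairwise distinct values). -/
theorem exists_separating_code (N q l M : ℕ) (hN : 2 ≤ N) (hq : N ≤ q) (hl : 1 ≤ l)
    (hM : N ≤ M)
    (hbound : (M : ℝ) ^ N *
        (1 - ∏ k ∈ Finset.Icc 1 (N - 1), (1 - (k : ℝ) / q)) ^ l < 1) :
    ∃ f : Fin M → (Fin l → Fin q),
      ∀ j : Fin N → Fin M, Function.Injective j →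
        ∃ p : Fin l, Function.Injective fun i => f (j i) p := by
  classical
  by_contra hcon
  push_neg at hcon
  have hq1 : 1 ≤ q := le_trans (le_trans one_le_two hN) hq
  have hq0 : (0:ℝ) < q := by exact_mod_cast hq1
  set D := q.descFactorial N with hD
  set F := q ^ N - D with hF
  have hDle : D ≤ q ^ N := Nat.descFactorial_le_pow q N
  -- card of non-injective maps
  have hcardNI : Fintype.card {s : Fin N → Fin q // ¬ Function.Injective s} = F := by
    rw [Fintype.card_subtype_compl]
    congr 1
    · simp
    · rw [Fintype.card_congr (Equiv.subtypeInjectiveEquivEmbedding (Fin N) (Fin q)),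
        Fintype.card_embedding_eq]
      simp [hD]
  -- per-tuple bad count bound
  have hBad : ∀ j : Fin N → Fin M, Function.Injective j →
      Fintype.card {f : Fin M → Fin l → Fin q // ∀ p, ¬ Function.Injective fun i => f (j i) p}
        ≤ F ^ l * (q ^ l) ^ (M - N) := by
    intro j hj
    have hcompl : Fintype.card {m : Fin M // ∀ i, j i ≠ m} = M - N := by
      have e : {m : Fin M // ∀ i, j i ≠ m} ≃ {m : Fin M // ¬ ∃ i, j i = m} :=
        Equiv.subtypeEquivRight (by intro m; push_neg; rfl)
      rw [Fintype.card_congr e, Fintype.card_subtype_compl]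
      have e2 : Fin N ≃ {m : Fin M // ∃ i, j i = m} := Equiv.ofInjective j hj
      rw [← Fintype.card_congr e2]
      simp
    let Φ : {f : Fin M → Fin l → Fin q // ∀ p, ¬ Function.Injective fun i => f (j i) p} →
        (Fin l → {s : Fin N → Fin q // ¬ Function.Injective s}) ×
          ({m : Fin M // ∀ i, j i ≠ m} → Fin l → Fin q) :=
      fun f => (fun p => ⟨fun i => f.1 (j i) p, f.2 p⟩, fun m p => f.1 m.1 p)
    have hΦ : Function.Injective Φ := by
      intro f g h
      apply Subtype.ext
      funext m p
      by_cases hm : ∃ i, j i = m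
      · obtain ⟨i, rfl⟩ := hm
        have := congrArg (fun x => ((x.1 p).1 i)) h
        simpa [Φ] using this
      · push_neg at hm
        exact congrArg (fun x => x.2 ⟨m, hm⟩ p) h
    calc Fintype.card {f : Fin M → Fin l → Fin q // ∀ p, ¬ Function.Injective fun i => f (j i) p}
        ≤ Fintype.card ((Fin l → {s : Fin N → Fin q // ¬ Function.Injective s}) ×
          ({m : Fin M // ∀ i, j i ≠ m} → Fin l → Fin q)) := Fintype.card_le_of_injective Φ hΦ
      _ = F ^ l * (q ^ l) ^ (M - N) := by
          rw [Fintype.card_prod, Fintype.card_fun, hcardNI, Fintype.card_fun, hcompl]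
          simp
  -- covering argument
  have hcover : (Finset.univ : Finset (Fin M → Fin l → Fin q)) ⊆
      (Finset.univ.filter (fun j : Fin N → Fin M => Function.Injective j)).biUnion
        (fun j => Finset.univ.filter
          (fun f : Fin M → Fin l → Fin q => ∀ p, ¬ Function.Injective fun i => f (j i) p)) := by
    intro f _
    obtain ⟨j, hj, hjf⟩ := hcon f
    exact Finset.mem_biUnion.mpr ⟨j, by simp [hj], by simp [hjf]⟩
  have hcount : (q ^ l) ^ M ≤ M ^ N * (F ^ l * (q ^ l) ^ (M - N)) := by
    have h1 : ((Finset.univ : Finset (Fin M → Fin l → Fin q))).card ≤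
        ∑ j ∈ Finset.univ.filter (fun j : Fin N → Fin M => Function.Injective j),
          (Finset.univ.filter
            (fun f : Fin M → Fin l → Fin q => ∀ p, ¬ Function.Injective fun i => f (j i) p)).card :=
      le_trans (Finset.card_le_card hcover) Finset.card_biUnion_le
    have h2 : ∑ j ∈ Finset.univ.filter (fun j : Fin N → Fin M => Function.Injective j),
          (Finset.univ.filter
            (fun f : Fin M → Fin l → Fin q => ∀ p, ¬ Function.Injective fun i => f (j i) p)).card
        ≤ M ^ N * (F ^ l * (q ^ l) ^ (M - N)) := by
      calc _ ≤ (Finset.univ.filter (fun j : Fin N → Fin M => Function.Injective j)).card *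
            (F ^ l * (q ^ l) ^ (M - N)) := by
              rw [Finset.card_eq_sum_ones, Finset.sum_mul, one_mul]
              refine Finset.sum_le_sum fun j hj => ?_
              rw [← Fintype.card_subtype]
              exact hBad j (Finset.mem_filter.mp hj).2
        _ ≤ M ^ N * (F ^ l * (q ^ l) ^ (M - N)) := by
              refine Nat.mul_le_mul_right _ ?_
              calc (Finset.univ.filter (fun j : Fin N → Fin M => Function.Injective j)).card
                  ≤ (Finset.univ : Finset (Fin N → Fin M)).card := Finset.card_filter_le _ _
                _ = M ^ N := by simp
    calc (q ^ l) ^ M = ((Finset.univ : Finset (Fin M → Fin l → Fin q))).card := by simp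
      _ ≤ _ := le_trans h1 h2
  -- real contradiction
  have hprod : (1 - ∏ k ∈ Finset.Icc 1 (N - 1), (1 - (k : ℝ) / q)) = (F : ℝ) / q ^ N := by
    rw [sep_prod_eq N q (le_trans one_le_two hN) hq, hF]
    push_cast [Nat.cast_sub hDle]
    rw [sub_div]
    congr 1
    field_simp
  have hqlN : (0:ℝ) < ((q:ℝ) ^ l) ^ (M - N) := by positivity
  have hcR : ((q:ℝ) ^ l) ^ M ≤ (M:ℝ) ^ N * ((F:ℝ) ^ l * ((q:ℝ) ^ l) ^ (M - N)) := by
    exact_mod_cast hcount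
  have hsplit : ((q:ℝ) ^ l) ^ M = ((q:ℝ) ^ l) ^ N * ((q:ℝ) ^ l) ^ (M - N) := by
    rw [← pow_add, Nat.add_sub_cancel' hM]
  have hkey : ((q:ℝ) ^ l) ^ N ≤ (M:ℝ) ^ N * (F:ℝ) ^ l := by
    rw [hsplit] at hcR
    rw [← mul_assoc] at hcR
    exact le_of_mul_le_mul_right hcR hqlN
  have hfinal : (1:ℝ) ≤ (M:ℝ) ^ N * ((F:ℝ) / (q:ℝ) ^ N) ^ l := by
    rw [div_pow, ← mul_div_assoc, le_div_iff₀ (by positivity), one_mul]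
    calc ((q:ℝ) ^ N) ^ l = ((q:ℝ) ^ l) ^ N := by rw [← pow_mul, ← pow_mul, Nat.mul_comm]
      _ ≤ (M:ℝ) ^ N * (F:ℝ) ^ l := hkey
  rw [hprod] at hbound
  linarith
end

section
/- In the cube GPT (ℝ⁴, C, u) with C = {(x₀,x₁,x₂,x₃) : x₀ ≥ max(|x₁|,|x₂|,|x₃|)} and u(x)=x₀, the three vertex states ω₁ = (1,1,1,1), ω₂ = (1,-1,1,-1), ω₃ = (1,-1,-1,1) are NOT jointly perfectly distinguishable: there is no measurement (f₁,f₂,f₃) with each fₖ ≥ 0 on C, f₁+f₂+f₃ = u, and fₖ(ωᵢ) = δ_{ki}. -/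
/-!
Every vertex state `ω k` has the antipodal state `c - ω k ∈ C`, where `c = (2,0,0,0)`. Positivity
of `f k` there, together with `f k (ω i) = δ k i`, gives `f k (2c - ∑ ω) = 2 f k (c - ω k) + 2 - 1 ≥ 1`
for each of the three `k`. Summing over `k` yields `u (2c - ∑ ω) ≥ 3`, whereas `u (2c - ∑ ω) = 4 - 3 = 1`.
-/

def PerfectlyDistinguishes {V ι : Type*} [AddCommGroup V] [Module ℝ V] [DecidableEq ι]
    (f : ι → V →ₗ[ℝ] ℝ) (ω : ι → V) : Prop :=
  ∀ k i, f k (ω i) = if k = i then 1 else 0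

namespace PerfectlyDistinguishes

variable {V ι : Type*} [AddCommGroup V] [Module ℝ V] [Fintype ι] [DecidableEq ι]
  {f : ι → V →ₗ[ℝ] ℝ} {ω : ι → V}

lemma one_le_apply (h : PerfectlyDistinguishes f ω) {c : V} (k : ι) (hk : 0 ≤ f k (c - ω k)) :
    1 ≤ f k (2 • c - ∑ i, ω i) := by
  have hsum : f k (∑ i, ω i) = 1 := by simp [map_sum, h k]
  have hdiag : f k (ω k) = 1 := by simp [h k]
  rw [map_sub, hdiag] at hk
  rw [map_sub, map_nsmul, hsum, nsmul_eq_mul, Nat.cast_ofNat]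
  linarith

lemma card_le_sum_apply (h : PerfectlyDistinguishes f ω) {c : V}
    (hc : ∀ k, 0 ≤ f k (c - ω k)) :
    (Fintype.card ι : ℝ) ≤ (∑ k, f k) (2 • c - ∑ i, ω i) := by
  rw [LinearMap.sum_apply, Fintype.card_eq_sum_ones, Nat.cast_sum, Nat.cast_one]
  exact Finset.sum_le_sum fun k _ => h.one_le_apply k (hc k)

end PerfectlyDistinguishes

/-- In the cube GPT `(ℝ⁴, C, u)` with `C = {x : x₀ ≥ max(|x₁|,|x₂|,|x₃|)}` and
`u(x) = x₀`, the vertex states `ω₁ = (1,1,1,1)`, `ω₂ = (1,-1,1,-1)`, `ω₃ = (1,-1,-1,1)`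
are not jointly perfectly distinguishable: there is no measurement `(f₁,f₂,f₃)` with
each `fₖ ≥ 0` on `C`, `f₁+f₂+f₃ = u`, and `fₖ(ωᵢ) = δₖᵢ`. -/
theorem cube_states_not_jointly_distinguishable :
    let C : Set (Fin 4 → ℝ) := {x | |x 1| ≤ x 0 ∧ |x 2| ≤ x 0 ∧ |x 3| ≤ x 0}
    let ω : Fin 3 → (Fin 4 → ℝ) := ![![1, 1, 1, 1], ![1, -1, 1, -1], ![1, -1, -1, 1]]
    ¬ ∃ f : Fin 3 → ((Fin 4 → ℝ) →ₗ[ℝ] ℝ),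
      (∀ k, ∀ x ∈ C, 0 ≤ f k x) ∧
      (∀ x : Fin 4 → ℝ, (∑ k, f k) x = x 0) ∧
      (∀ k i : Fin 3, f k (ω i) = if k = i then 1 else 0) := by
  intro C ω
  rintro ⟨f, hpos, hsum, hδ⟩
  let c : Fin 4 → ℝ := ![2, 0, 0, 0]
  have hantipode : ∀ k, c - ω k ∈ C := by
    intro k
    fin_cases k <;> simp [C, c, ω] <;> norm_num
  have hcard := PerfectlyDistinguishes.card_le_sum_apply (ω := ω) hδ
    fun k => hpos k _ (hantipode k)
  rw [hsum] at hcard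
  simp [c, ω, Fin.sum_univ_three] at hcard
  norm_num at hcard
end
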